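/- Unique solvability and positivity of the upwind finite-volume u-step: the linear system requiring that, for every 1 ≤ j ≤ J, |K_j| (u_j^{n+1} − u_j^n)/Δt − (δₓu^{n+1}_{j+1/2} − δₓu^{n+1}_{j−1/2}) + χ [ (δₓv^n_{j+1/2})₊ u_j^{n+1} + (δₓv^n_{j+1/2})₋ u_{j+1}^{n+1} − (δₓv^n_{j−1/2})₊ u_{j−1}^{n+1} − (δₓv^n_{j−1/2})₋ u_j^{n+1} ] = 0, has exactly one solution u^{n+1} ∈ ℝ^J; moreover, if u_j^n ≥ 0 for all 1 ≤ j ≤ J, then u_j^{n+1} ≥ 0 for all 1 ≤ j ≤ J. -/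
import Mathlib


/-- Control-volume size: `|K_1| = |K_J| = h/2` and `|K_j| = h` for interior `j`. -/
noncomputable def Kvol (J : ℕ) (h : ℝ) (j : ℕ) : ℝ :=
  if j = 1 ∨ j = J then h/2 else h

/-- Half-point difference `δₓw_{j+1/2} = (w_{j+1} − w_j)/h` for `1 ≤ j ≤ J−1`,
with the zero-flux conventions `δₓw_{1/2} = δₓw_{J+1/2} = 0`. -/
noncomputable def dhalf (J : ℕ) (h : ℝ) (w : ℕ → ℝ) (j : ℕ) : ℝ :=
  if 1 ≤ j ∧ j ≤ J - 1 then (w (j+1) - w j)/h else 0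

/-- Extension of a vector `w ∈ ℝ^J` (indexed by `Fin J`) to indices
`j = 1, …, J`, with the fictitious values outside taken to be `0`. -/
def extJ (J : ℕ) (w : Fin J → ℝ) (j : ℕ) : ℝ :=
  if hj : 1 ≤ j ∧ j ≤ J then w ⟨j - 1, by omega⟩ else 0

/-- The upwind finite-volume u-step scheme, for a candidate solution `w = u^{n+1}`. -/
def schemeU (J : ℕ) (h Δt χ : ℝ) (un vn w : ℕ → ℝ) : Prop :=
  ∀ j : ℕ, 1 ≤ j → j ≤ J →
    Kvol J h j * (w j - un j) / Δt
      - (dhalf J h w j - dhalf J h w (j-1))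
      + χ * (max (dhalf J h vn j) 0 * w j
           + min (dhalf J h vn j) 0 * w (j+1)
           - max (dhalf J h vn (j-1)) 0 * w (j-1)
           - min (dhalf J h vn (j-1)) 0 * w j) = 0

/-! ### Auxiliary machinery -/

/-- Interface indicator times `1/h`. -/
noncomputable def sflux (J : ℕ) (h : ℝ) (j : ℕ) : ℝ :=
  if 1 ≤ j ∧ j ≤ J - 1 then 1/h else 0

lemma dhalf_eq_sflux (J : ℕ) (h : ℝ) (w : ℕ → ℝ) (j : ℕ) :
    dhalf J h w j = sflux J h j * (w (j+1) - w j) := by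
  unfold dhalf sflux
  split
  · ring
  · simp

lemma sflux_nonneg (J : ℕ) (h : ℝ) (hh : 0 < h) (j : ℕ) : 0 ≤ sflux J h j := by
  unfold sflux; split
  · positivity
  · exact le_refl 0

/-- Lower-diagonal coefficient. -/
noncomputable def Cm (J : ℕ) (h χ : ℝ) (vn : ℕ → ℝ) (p : ℕ) : ℝ :=
  -(sflux J h (p-1)) - χ * max (dhalf J h vn (p-1)) 0

/-- Diagonal coefficient. -/
noncomputable def C0 (J : ℕ) (h Δt χ : ℝ) (vn : ℕ → ℝ) (p : ℕ) : ℝ :=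
  Kvol J h p / Δt + sflux J h p + sflux J h (p-1)
    + χ * (max (dhalf J h vn p) 0 - min (dhalf J h vn (p-1)) 0)

/-- Upper-diagonal coefficient. -/
noncomputable def Cp (J : ℕ) (h χ : ℝ) (vn : ℕ → ℝ) (p : ℕ) : ℝ :=
  -(sflux J h p) + χ * min (dhalf J h vn p) 0

/-- System matrix for the u-step. -/
noncomputable def Amat (J : ℕ) (h Δt χ : ℝ) (vn : ℕ → ℝ) : Matrix (Fin J) (Fin J) ℝ :=
  fun i j =>
    (if i.1 = j.1 + 1 then Cm J h χ vn (i.1+1) else 0)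
  + (if i.1 = j.1 then C0 J h Δt χ vn (i.1+1) else 0)
  + (if i.1 + 1 = j.1 then Cp J h χ vn (i.1+1) else 0)

lemma sum_ite_nat_eq {n : ℕ} (k : ℕ) (f : Fin n → ℝ) :
    (∑ i : Fin n, if i.1 = k then f i else 0) = if hk : k < n then f ⟨k, hk⟩ else 0 := by
  split
  · rename_i hk
    rw [Finset.sum_eq_single (⟨k, hk⟩ : Fin n)]
    · simp
    · intro b _ hb
      rw [if_neg]
      intro hb'; exact hb (Fin.ext hb')
    · simp
  · rename_i hk
    apply Finset.sum_eq_zero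
    intro i _
    rw [if_neg]
    intro hi; exact hk (hi ▸ i.2)

lemma mmatrix_nonneg {n : ℕ} (A : Matrix (Fin n) (Fin n) ℝ)
    (hoff : ∀ i j : Fin n, i ≠ j → A i j ≤ 0) (hcol : ∀ j, 0 < ∑ i, A i j)
    (w : Fin n → ℝ) (hw : ∀ i, 0 ≤ A.mulVec w i) : ∀ j, 0 ≤ w j := by
  by_contra hc
  push_neg at hc
  obtain ⟨j₀, hj₀⟩ := hc
  classical
  set S : Finset (Fin n) := Finset.univ.filter (fun j => w j < 0) with hSdef
  have hmem : ∀ j, j ∈ S ↔ w j < 0 := by intro j; simp [hSdef]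
  have h1 : (0:ℝ) ≤ ∑ i ∈ S, A.mulVec w i := Finset.sum_nonneg fun i _ => hw i
  have h2 : ∑ i ∈ S, A.mulVec w i = ∑ j : Fin n, (∑ i ∈ S, A i j) * w j := by
    simp only [Matrix.mulVec, dotProduct]
    rw [Finset.sum_comm]
    simp [Finset.sum_mul]
  have hout : ∀ j : Fin n, j ∉ S → (∑ i ∈ S, A i j) * w j ≤ 0 := by
    intro j hj
    have hwj : 0 ≤ w j := le_of_not_gt (fun hlt => hj ((hmem j).mpr hlt))
    have hs : (∑ i ∈ S, A i j) ≤ 0 := Finset.sum_nonpos fun i hi =>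
      hoff i j (fun he => hj (he ▸ hi))
    exact mul_nonpos_of_nonpos_of_nonneg hs hwj
  have hin : ∀ j : Fin n, j ∈ S → (∑ i ∈ S, A i j) * w j < 0 := by
    intro j hj
    have hwj : w j < 0 := (hmem j).mp hj
    have hs : 0 < ∑ i ∈ S, A i j := by
      have hsplit : ∑ i : Fin n, A i j = ∑ i ∈ S, A i j + ∑ i ∈ Sᶜ, A i j := by
        rw [Finset.sum_add_sum_compl]
      have hc2 : ∑ i ∈ Sᶜ, A i j ≤ 0 := Finset.sum_nonpos fun i hi => by
        apply hoff i j
        intro he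
        exact (Finset.mem_compl.mp hi) (he ▸ hj)
      have := hcol j
      linarith
    exact mul_neg_of_pos_of_neg hs hwj
  have hj₀S : j₀ ∈ S := (hmem j₀).mpr hj₀
  have htot : ∑ j : Fin n, (∑ i ∈ S, A i j) * w j < 0 := by
    rw [← Finset.add_sum_erase _ _ (Finset.mem_univ j₀)]
    have h3 : ∑ j ∈ Finset.univ.erase j₀, (∑ i ∈ S, A i j) * w j ≤ 0 := by
      apply Finset.sum_nonpos
      intro j _
      by_cases hjS : j ∈ S
      · exact le_of_lt (hin j hjS)
      · exact hout j hjS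
    have := hin j₀ hj₀S
    linarith
  rw [h2] at h1
  linarith

/-- The matrix-vector product evaluates to the tridiagonal expression. -/
lemma mulVec_Amat (J : ℕ) (hJ : 3 ≤ J) (h Δt χ : ℝ) (vn : ℕ → ℝ)
    (w : Fin J → ℝ) (i : Fin J) :
    (Amat J h Δt χ vn).mulVec w i
      = Cm J h χ vn (i.1+1) * extJ J w i.1
      + C0 J h Δt χ vn (i.1+1) * extJ J w (i.1+1)
      + Cp J h χ vn (i.1+1) * extJ J w (i.1+2) := by
  have hiJ : i.1 < J := i.2
  simp only [Matrix.mulVec, dotProduct, Amat, add_mul, Finset.sum_add_distrib]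
  have e1 : (∑ j : Fin J, (if i.1 = j.1 + 1 then Cm J h χ vn (i.1+1) else 0) * w j)
      = Cm J h χ vn (i.1+1) * extJ J w i.1 := by
    rcases Nat.eq_zero_or_pos i.1 with h0 | h1
    · rw [Finset.sum_eq_zero, extJ]
      · rw [dif_neg (by omega), mul_zero]
      · intro j _
        rw [if_neg (by omega), zero_mul]
    · have hrw : ∀ j : Fin J, (if i.1 = j.1 + 1 then Cm J h χ vn (i.1+1) else 0) * w j
          = (if j.1 = i.1 - 1 then Cm J h χ vn (i.1+1) * w j else 0) := by
        intro j
        by_cases hc : j.1 = i.1 - 1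
        · rw [if_pos (by omega), if_pos hc]
        · rw [if_neg (by omega), if_neg hc, zero_mul]
      rw [Finset.sum_congr rfl (fun j _ => hrw j), sum_ite_nat_eq,
        dif_pos (show i.1 - 1 < J by omega), extJ, dif_pos (by omega)]
  have e2 : (∑ j : Fin J, (if i.1 = j.1 then C0 J h Δt χ vn (i.1+1) else 0) * w j)
      = C0 J h Δt χ vn (i.1+1) * extJ J w (i.1+1) := by
    have hrw : ∀ j : Fin J, (if i.1 = j.1 then C0 J h Δt χ vn (i.1+1) else 0) * w j
        = (if j.1 = i.1 then C0 J h Δt χ vn (i.1+1) * w j else 0) := by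
      intro j
      by_cases hc : j.1 = i.1
      · rw [if_pos hc.symm, if_pos hc]
      · rw [if_neg (fun hc' => hc hc'.symm), if_neg hc, zero_mul]
    rw [Finset.sum_congr rfl (fun j _ => hrw j), sum_ite_nat_eq,
      dif_pos hiJ, extJ, dif_pos (by omega)]
    simp
  have e3 : (∑ j : Fin J, (if i.1 + 1 = j.1 then Cp J h χ vn (i.1+1) else 0) * w j)
      = Cp J h χ vn (i.1+1) * extJ J w (i.1+2) := by
    have hrw : ∀ j : Fin J, (if i.1 + 1 = j.1 then Cp J h χ vn (i.1+1) else 0) * w j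
        = (if j.1 = i.1 + 1 then Cp J h χ vn (i.1+1) * w j else 0) := by
      intro j
      by_cases hc : j.1 = i.1 + 1
      · rw [if_pos hc.symm, if_pos hc]
      · rw [if_neg (fun hc' => hc hc'.symm), if_neg hc, zero_mul]
    rw [Finset.sum_congr rfl (fun j _ => hrw j), sum_ite_nat_eq]
    by_cases hlt : i.1 + 1 < J
    · rw [dif_pos hlt, extJ, dif_pos (by omega)]
      simp
    · rw [dif_neg hlt, extJ, dif_neg (by omega), mul_zero]
  rw [e1, e2, e3]

/-- Vanishing facts at the boundary. -/
lemma sflux_zero_left (J : ℕ) (h : ℝ) : sflux J h 0 = 0 := by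
  unfold sflux; rw [if_neg (by omega)]

lemma sflux_zero_right (J : ℕ) (hJ : 1 ≤ J) (h : ℝ) : sflux J h J = 0 := by
  unfold sflux; rw [if_neg (by omega)]

lemma dhalf_zero_left (J : ℕ) (h : ℝ) (w : ℕ → ℝ) : dhalf J h w 0 = 0 := by
  unfold dhalf; rw [if_neg (by omega)]

lemma dhalf_zero_right (J : ℕ) (hJ : 1 ≤ J) (h : ℝ) (w : ℕ → ℝ) : dhalf J h w J = 0 := by
  unfold dhalf; rw [if_neg (by omega)]

/-- Column sums of the system matrix. -/
lemma colsum_Amat (J : ℕ) (hJ : 3 ≤ J) (h Δt χ : ℝ) (vn : ℕ → ℝ) (j : Fin J) :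
    (∑ i, Amat J h Δt χ vn i j) = Kvol J h (j.1+1) / Δt := by
  have hjJ : j.1 < J := j.2
  simp only [Amat, Finset.sum_add_distrib]
  have e1 : (∑ i : Fin J, if i.1 = j.1 + 1 then Cm J h χ vn (i.1+1) else 0)
      = if j.1 + 1 < J then Cm J h χ vn (j.1+2) else 0 := by
    rw [sum_ite_nat_eq]
    by_cases hc : j.1 + 1 < J
    · rw [dif_pos hc, if_pos hc]
    · rw [dif_neg hc, if_neg hc]
  have e2 : (∑ i : Fin J, if i.1 = j.1 then C0 J h Δt χ vn (i.1+1) else 0)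
      = C0 J h Δt χ vn (j.1+1) := by
    rw [sum_ite_nat_eq, dif_pos hjJ]
  have e3 : (∑ i : Fin J, if i.1 + 1 = j.1 then Cp J h χ vn (i.1+1) else 0)
      = if 1 ≤ j.1 then Cp J h χ vn j.1 else 0 := by
    by_cases h1 : 1 ≤ j.1
    · have hrw : ∀ i : Fin J, (if i.1 + 1 = j.1 then Cp J h χ vn (i.1+1) else 0)
          = (if i.1 = j.1 - 1 then Cp J h χ vn (i.1+1) else 0) := by
        intro i
        by_cases hc : i.1 + 1 = j.1
        · rw [if_pos hc, if_pos (by omega)]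
        · rw [if_neg hc, if_neg (by omega)]
      rw [Finset.sum_congr rfl (fun i _ => hrw i), sum_ite_nat_eq,
        dif_pos (show j.1 - 1 < J by omega), if_pos h1]
      congr 1
      show j.1 - 1 + 1 = j.1
      omega
    · rw [if_neg h1, Finset.sum_eq_zero]
      intro i _
      rw [if_neg (by omega)]
  rw [e1, e2, e3]
  rcases Nat.eq_zero_or_pos j.1 with h0 | hpos
  · -- k = 1
    rw [if_pos (by omega), if_neg (by omega), h0]
    simp only [Cm, C0]
    norm_num
    rw [sflux_zero_left, dhalf_zero_left]
    simp only [min_self]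
    ring
  · by_cases hlt : j.1 + 1 < J
    · -- interior
      rw [if_pos hlt, if_pos (show 1 ≤ j.1 by omega)]
      simp only [Cm, C0, Cp, Nat.add_sub_cancel,
        show ∀ m : ℕ, m + 2 - 1 = m + 1 from fun _ => rfl]
      ring
    · -- k = J
      have hJj : j.1 + 1 = J := by omega
      rw [if_neg hlt, if_pos (show 1 ≤ j.1 by omega)]
      simp only [Cm, C0, Cp, Nat.add_sub_cancel]
      rw [hJj, sflux_zero_right J (by omega), dhalf_zero_right J (by omega)]
      simp only [max_self]
      ring

/-- Off-diagonal entries of the system matrix are nonpositive. -/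
lemma offdiag_Amat (J : ℕ) (h Δt χ : ℝ) (hh : 0 < h) (hχ : 0 < χ) (vn : ℕ → ℝ)
    (i j : Fin J) (hij : i ≠ j) : Amat J h Δt χ vn i j ≤ 0 := by
  have hne : i.1 ≠ j.1 := fun he => hij (Fin.ext he)
  have hCm : Cm J h χ vn (i.1+1) ≤ 0 := by
    unfold Cm
    have h1 := sflux_nonneg J h hh (i.1+1-1)
    have h2 : (0:ℝ) ≤ max (dhalf J h vn (i.1+1-1)) 0 := le_max_right _ _
    nlinarith
  have hCp : Cp J h χ vn (i.1+1) ≤ 0 := by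
    unfold Cp
    have h1 := sflux_nonneg J h hh (i.1+1)
    have h2 : min (dhalf J h vn (i.1+1)) 0 ≤ 0 := min_le_right _ _
    nlinarith
  unfold Amat
  rw [if_neg hne]
  by_cases hc1 : i.1 = j.1 + 1
  · rw [if_pos hc1, if_neg (by omega)]
    linarith
  · rw [if_neg hc1]
    by_cases hc2 : i.1 + 1 = j.1
    · rw [if_pos hc2]; linarith
    · rw [if_neg hc2]; norm_num

/-- The scheme left-hand side as a tridiagonal linear expression. -/
lemma scheme_lhs_eq (J : ℕ) (h Δt χ : ℝ) (un vn w' : ℕ → ℝ) (p : ℕ) (hp : 1 ≤ p) :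
    Kvol J h p * (w' p - un p) / Δt
      - (dhalf J h w' p - dhalf J h w' (p-1))
      + χ * (max (dhalf J h vn p) 0 * w' p
           + min (dhalf J h vn p) 0 * w' (p+1)
           - max (dhalf J h vn (p-1)) 0 * w' (p-1)
           - min (dhalf J h vn (p-1)) 0 * w' p)
    = Cm J h χ vn p * w' (p-1) + C0 J h Δt χ vn p * w' p + Cp J h χ vn p * w' (p+1)
      - Kvol J h p * un p / Δt := by
  have hps : p - 1 + 1 = p := by omega
  rw [dhalf_eq_sflux J h w' p, dhalf_eq_sflux J h w' (p-1), hps]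
  unfold Cm C0 Cp
  ring

/-- The scheme is equivalent to the linear system `A w = b`. -/
lemma scheme_iff (J : ℕ) (hJ : 3 ≤ J) (h Δt χ : ℝ) (un vn : ℕ → ℝ) (w : Fin J → ℝ) :
    schemeU J h Δt χ un vn (extJ J w) ↔
      ∀ i : Fin J, (Amat J h Δt χ vn).mulVec w i
        = Kvol J h (i.1+1) * un (i.1+1) / Δt := by
  constructor
  · intro hs i
    have hp1 : 1 ≤ i.1 + 1 := by omega
    have hpJ : i.1 + 1 ≤ J := i.2
    have := hs (i.1+1) hp1 hpJ
    rw [scheme_lhs_eq J h Δt χ un vn (extJ J w) (i.1+1) hp1] at this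
    rw [mulVec_Amat J hJ h Δt χ vn w i]
    have hidx : i.1 + 1 - 1 = i.1 := by omega
    rw [hidx] at this
    linarith
  · intro hm p hp1 hpJ
    set i : Fin J := ⟨p - 1, by omega⟩ with hi
    have hip : i.1 + 1 = p := by simp [hi]; omega
    have := hm i
    rw [mulVec_Amat J hJ h Δt χ vn w i, hip] at this
    rw [scheme_lhs_eq J h Δt χ un vn (extJ J w) p hp1]
    have hidx : i.1 = p - 1 := by simp [hi]
    rw [hidx] at this
    have hidx2 : p - 1 + 2 = p + 1 := by omega
    rw [hidx2] at this
    linarith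

/-- Control volumes are positive. -/
lemma Kvol_pos (J : ℕ) (h : ℝ) (hh : 0 < h) (j : ℕ) : 0 < Kvol J h j := by
  unfold Kvol; split <;> linarith


/-- Unique solvability and positivity of the upwind finite-volume u-step:
the scheme has exactly one solution `u^{n+1} ∈ ℝ^J`, and if `u^n ≥ 0`
componentwise then so is `u^{n+1}`. -/
theorem fv_upwind_unique_positive
    (J : ℕ) (hJ : 3 ≤ J) (h Δt χ : ℝ) (hh : 0 < h) (hΔt : 0 < Δt) (hχ : 0 < χ)
    (un vn : ℕ → ℝ) :
    (∃! w : Fin J → ℝ, schemeU J h Δt χ un vn (extJ J w)) ∧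
    (∀ w : Fin J → ℝ, schemeU J h Δt χ un vn (extJ J w) →
      (∀ j : ℕ, 1 ≤ j → j ≤ J → 0 ≤ un j) → ∀ i : Fin J, 0 ≤ w i) := by
  set A := Amat J h Δt χ vn with hA
  have hoff : ∀ i j : Fin J, i ≠ j → A i j ≤ 0 :=
    fun i j hij => offdiag_Amat J h Δt χ hh hχ vn i j hij
  have hcol : ∀ j : Fin J, 0 < ∑ i, A i j := by
    intro j
    rw [hA, colsum_Amat J hJ h Δt χ vn j]
    exact div_pos (Kvol_pos J h hh _) hΔt
  -- injectivity of mulVec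
  have hker : ∀ v : Fin J → ℝ, A.mulVec v = 0 → v = 0 := by
    intro v hv
    have h1 : ∀ i, 0 ≤ A.mulVec v i := fun i => by rw [hv]; exact le_refl 0
    have h2 : ∀ i, 0 ≤ A.mulVec (-v) i := fun i => by
      rw [Matrix.mulVec_neg, hv]
      simp
    have p1 := mmatrix_nonneg A hoff hcol v h1
    have p2 := mmatrix_nonneg A hoff hcol (-v) h2
    funext i
    have := p2 i
    simp only [Pi.neg_apply, neg_nonneg] at this
    exact le_antisymm this (p1 i)
  have hinj : Function.Injective A.mulVecLin := by
    rw [← LinearMap.ker_eq_bot]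
    apply LinearMap.ker_eq_bot'.mpr
    intro v hv
    exact hker v (by simpa using hv)
  have hsurj : Function.Surjective A.mulVecLin :=
    (LinearMap.injective_iff_surjective).mp hinj
  set b : Fin J → ℝ := fun i => Kvol J h (i.1+1) * un (i.1+1) / Δt with hb
  obtain ⟨w₀, hw₀⟩ := hsurj b
  have hw₀' : ∀ i, A.mulVec w₀ i = b i := fun i => by
    rw [show A.mulVec w₀ = A.mulVecLin w₀ from rfl, hw₀]
  constructor
  · refine ⟨w₀, (scheme_iff J hJ h Δt χ un vn w₀).mpr hw₀', ?_⟩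
    intro y hy
    apply hinj
    rw [hw₀]
    funext i
    exact (scheme_iff J hJ h Δt χ un vn y).mp hy i
  · intro w hw hun i
    have hm := (scheme_iff J hJ h Δt χ un vn w).mp hw
    apply mmatrix_nonneg A hoff hcol w
    intro i'
    rw [hm i']
    have hK := Kvol_pos J h hh (i'.1+1)
    have hu := hun (i'.1+1) (by omega) i'.2
    positivity
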